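/- Let K be a field, S = K[x_1,…,x_n], and let φ: S[x_{n+1}] → S be the K-algebra homomorphism with φ(x_i) = x_i for i ≤ n and φ(x_{n+1}) = 1. Let I' ⊆ S[x_{n+1}] be a monomial ideal and let I = φ(I') be its image ideal in S. Then sdepth(I') ≤ sdepth(I) + 1. -/

import Mathlib

/-!
A Stanley decomposition `I' = ⊕ u_i K[Z_i]` partitions the exponent set of `I'` into the
translated orthants `u_i + ℕ^{Z_i}`, so `I'` is the monomial ideal generated by the `u_i`.
Slice at an `x_{n+1}`-degree `c` larger than that of every `u_i`: the exponents of `I'` in the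
slice are exactly the `(a, c)` with `x^a ∈ φ(I')`, and the orthant of `u_i` meets the slice iff
`x_{n+1} ∈ Z_i`, in which case it meets it in a copy of the orthant of `φ(u_i)` in the variables
`Z_i \ {x_{n+1}}`. These slices form a Stanley decomposition of `φ(I')` in which every `|Z_i|`
has dropped by exactly one.
-/

open MvPolynomial

/-- The Stanley space `u K[Z]`: the `K`-span of all monomials `x^(u+τ)` with
`supp τ ⊆ Z`. -/
noncomputable def StanleySpace (K : Type*) [Field K] {n : ℕ} (u : Fin n →₀ ℕ) (Z : Finset (Fin n)) :
    Submodule K (MvPolynomial (Fin n) K) :=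
  Submodule.span K {p | ∃ τ : Fin n →₀ ℕ, (τ.support : Set (Fin n)) ⊆ Z ∧
    p = monomial (u + τ) (1 : K)}

/-- A Stanley decomposition of a monomial ideal `I`: a finite family of Stanley spaces
`u_i K[Z_i]` with `u_i` a monomial of `I`, whose internal direct sum is `I`
(as a `K`-vector space). -/
structure StanleyDecomposition (K : Type*) [Field K] {n : ℕ}
    (I : Ideal (MvPolynomial (Fin n) K)) where
  r : ℕ
  rpos : 0 < r
  u : Fin r → (Fin n →₀ ℕ)
  Z : Fin r → Finset (Fin n)
  mem : ∀ i, monomial (u i) (1 : K) ∈ I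
  isSup : Submodule.restrictScalars K I = ⨆ i, StanleySpace K (u i) (Z i)
  indep : iSupIndep fun i => StanleySpace K (u i) (Z i)

/-- `sdepth 𝒟 = min_i |Z_i|`. -/
def StanleyDecomposition.sdepth {K : Type*} [Field K] {n : ℕ}
    {I : Ideal (MvPolynomial (Fin n) K)} (D : StanleyDecomposition K I) : ℕ :=
  Finset.univ.inf' ⟨⟨0, D.rpos⟩, Finset.mem_univ _⟩ fun i => (D.Z i).card

/-- The Stanley depth of a monomial ideal: the maximum of `sdepth 𝒟` over all
Stanley decompositions `𝒟` of `I`. -/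
noncomputable def Ideal.sdepth (K : Type*) [Field K] {n : ℕ}
    (I : Ideal (MvPolynomial (Fin n) K)) : ℕ :=
  sSup (Set.range fun D : StanleyDecomposition K I => D.sdepth)

open Function

namespace MvPolynomial

variable {σ R : Type*} [CommSemiring R]

theorem iSup_restrictSupport {ι : Type*} (s : ι → Set (σ →₀ ℕ)) :
    ⨆ i, restrictSupport R (s i) = restrictSupport R (⋃ i, s i) := by
  simp only [restrictSupport_eq_span, Set.image_iUnion, Submodule.span_iUnion]

theorem disjoint_restrictSupport_iff [Nontrivial R] {s t : Set (σ →₀ ℕ)} :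
    Disjoint (restrictSupport R s) (restrictSupport R t) ↔ Disjoint s t := by
  refine ⟨fun h => Set.disjoint_left.mpr fun b hs ht => ?_, fun h => ?_⟩
  · have := Submodule.disjoint_def.mp h (monomial b (1 : R)) (by simp [hs]) (by simp [ht])
    exact one_ne_zero (monomial_eq_zero.mp this)
  · refine Submodule.disjoint_def.mpr fun p hs ht => ?_
    rw [← support_eq_empty, Finset.eq_empty_iff_forall_notMem]
    exact fun b hb => Set.disjoint_left.mp h (hs hb) (ht hb)

theorem iSupIndep_restrictSupport_iff [Nontrivial R] {ι : Type*} {s : ι → Set (σ →₀ ℕ)} :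
    iSupIndep (fun i => restrictSupport R (s i)) ↔ Pairwise (Disjoint on s) := by
  refine ⟨fun h i j hij => disjoint_restrictSupport_iff.mp (h.pairwiseDisjoint hij),
    fun h i => ?_⟩
  simp only [iSup_subtype', iSup_restrictSupport]
  rw [disjoint_restrictSupport_iff, Set.disjoint_iUnion_right]
  exact fun j => h (Ne.symm j.2)

theorem restrictScalars_span_monomial_image (s : Set (σ →₀ ℕ)) :
    (Ideal.span ((monomial · (1 : R)) '' s)).restrictScalars R =
      restrictSupport R (upperClosure s) := by
  ext p
  simp [mem_ideal_span_monomial_image, mem_restrictSupport_iff, Set.subset_def]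

end MvPolynomial

namespace Finsupp

variable {n : ℕ}

noncomputable def snoc (s : Fin n →₀ ℕ) (y : ℕ) : Fin (n + 1) →₀ ℕ :=
  equivFunOnFinite.symm (Fin.snoc s y)

noncomputable def init (s : Fin (n + 1) →₀ ℕ) : Fin n →₀ ℕ :=
  equivFunOnFinite.symm (Fin.init s)

@[simp] theorem snoc_castSucc (s : Fin n →₀ ℕ) (y : ℕ) (i : Fin n) :
    snoc s y i.castSucc = s i := by
  simp [snoc]

@[simp] theorem snoc_last (s : Fin n →₀ ℕ) (y : ℕ) : snoc s y (Fin.last n) = y := by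
  simp [snoc]

@[simp] theorem init_apply (s : Fin (n + 1) →₀ ℕ) (i : Fin n) : init s i = s i.castSucc := rfl

theorem le_snoc_iff {b : Fin (n + 1) →₀ ℕ} {s : Fin n →₀ ℕ} {y : ℕ} :
    b ≤ snoc s y ↔ init b ≤ s ∧ b (Fin.last n) ≤ y := by
  simp [Finsupp.le_def, Fin.forall_fin_succ']

end Finsupp

open Finsupp

theorem Finset.card_preimage_castSucc_add_one {n : ℕ} {Z : Finset (Fin (n + 1))}
    (hZ : Fin.last n ∈ Z) :
    (Z.preimage Fin.castSucc (Fin.castSucc_injective n).injOn).card + 1 = Z.card := by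
  have : Z.filter (· ∈ Set.range Fin.castSucc) = Z.erase (Fin.last n) := by
    ext i
    simp [Fin.ext_iff, and_comm, Nat.lt_iff_le_and_ne, Nat.le_of_lt_succ i.is_lt]
  rw [Finset.card_preimage, this, Finset.card_erase_add_one hZ]

section Dehomogenize

variable (R : Type*) [CommSemiring R] (n : ℕ)

noncomputable def dehomogenizeLast : MvPolynomial (Fin (n + 1)) R →ₐ[R] MvPolynomial (Fin n) R :=
  aeval (Fin.snoc X 1)

variable {R n}

theorem dehomogenizeLast_monomial (b : Fin (n + 1) →₀ ℕ) :
    dehomogenizeLast R n (monomial b 1) = monomial (init b) 1 := by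
  rw [dehomogenizeLast, aeval_monomial, map_one, one_mul, Finsupp.prod_pow,
    Fin.prod_univ_castSucc, monomial_eq, C_1, one_mul, Finsupp.prod_pow]
  simp

theorem map_dehomogenizeLast_span_monomial (s : Set (Fin (n + 1) →₀ ℕ)) :
    (Ideal.span ((monomial · (1 : R)) '' s)).map (dehomogenizeLast R n) =
      Ideal.span ((monomial · (1 : R)) '' (init '' s)) := by
  simp [Ideal.map_span, Set.image_image, dehomogenizeLast_monomial]

end Dehomogenize

theorem Finsupp.snoc_mem_upperClosure_iff {n : ℕ} {s : Set (Fin (n + 1) →₀ ℕ)}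
    {a : Fin n →₀ ℕ} {c : ℕ} (hc : ∀ b ∈ s, b (Fin.last n) ≤ c) :
    snoc a c ∈ upperClosure s ↔ a ∈ upperClosure (init '' s) := by
  simp only [mem_upperClosure, le_snoc_iff, Set.exists_mem_image]
  exact exists_congr fun b => and_congr_right fun hb => and_iff_left (hc b hb)

def stanleyExponents {σ : Type*} (u : σ →₀ ℕ) (Z : Finset σ) : Set (σ →₀ ℕ) :=
  {b | u ≤ b ∧ ∀ i ∉ Z, b i = u i}

theorem stanleySpace_eq_restrictSupport (K : Type*) [Field K] {n : ℕ} (u : Fin n →₀ ℕ)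
    (Z : Finset (Fin n)) :
    StanleySpace K u Z = restrictSupport K (stanleyExponents u Z) := by
  rw [StanleySpace, restrictSupport_eq_span]
  congr 1
  ext p
  constructor
  · rintro ⟨τ, hτ, rfl⟩
    refine ⟨u + τ, ⟨le_self_add, fun i hi => ?_⟩, rfl⟩
    simp [notMem_support_iff.mp fun h => hi (hτ h)]
  · rintro ⟨b, ⟨hub, hZ⟩, rfl⟩
    refine ⟨b - u, fun i hi => by_contra fun h => ?_, by rw [add_tsub_cancel_of_le hub]⟩
    simp [hZ i h] at hi

theorem snoc_mem_stanleyExponents_iff {n : ℕ} {u : Fin (n + 1) →₀ ℕ} {Z : Finset (Fin (n + 1))}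
    {a : Fin n →₀ ℕ} {c : ℕ} (hc : u (Fin.last n) < c) :
    snoc a c ∈ stanleyExponents u Z ↔ Fin.last n ∈ Z ∧
      a ∈ stanleyExponents (init u) (Z.preimage Fin.castSucc (Fin.castSucc_injective n).injOn) := by
  simp only [stanleyExponents, Set.mem_ofPred_eq, le_snoc_iff, Fin.forall_fin_succ', snoc_castSucc,
    snoc_last, Finset.mem_preimage, init_apply]
  have := hc.ne'
  have := hc.le
  tauto

namespace StanleyDecomposition

variable {K : Type*} [Field K] {n : ℕ}

section

variable {I : Ideal (MvPolynomial (Fin n) K)}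

theorem le_sdepth_iff (D : StanleyDecomposition K I) {d : ℕ} :
    d ≤ D.sdepth ↔ ∀ i, d ≤ (D.Z i).card :=
  ⟨fun h i => h.trans (Finset.inf'_le _ (Finset.mem_univ i)),
    fun h => Finset.le_inf' _ _ fun i _ => h i⟩

theorem sdepth_le_card (D : StanleyDecomposition K I) (i : Fin D.r) : D.sdepth ≤ (D.Z i).card :=
  D.le_sdepth_iff.mp le_rfl i

theorem sdepth_le_sdepth (D : StanleyDecomposition K I) : D.sdepth ≤ I.sdepth K := by
  refine le_csSup ⟨n, ?_⟩ ⟨D, rfl⟩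
  rintro _ ⟨D', rfl⟩
  calc D'.sdepth ≤ (D'.Z ⟨0, D'.rpos⟩).card := D'.sdepth_le_card _
    _ ≤ n := by simpa using Finset.card_le_univ (D'.Z ⟨0, D'.rpos⟩)

theorem restrictScalars_eq (D : StanleyDecomposition K I) :
    I.restrictScalars K = restrictSupport K (⋃ i, stanleyExponents (D.u i) (D.Z i)) := by
  simp only [D.isSup, stanleySpace_eq_restrictSupport, iSup_restrictSupport]

theorem pairwise_disjoint (D : StanleyDecomposition K I) :
    Pairwise (Disjoint on fun i => stanleyExponents (D.u i) (D.Z i)) :=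
  iSupIndep_restrictSupport_iff.mp (by simpa only [stanleySpace_eq_restrictSupport] using D.indep)

theorem iUnion_stanleyExponents (D : StanleyDecomposition K I) :
    ⋃ i, stanleyExponents (D.u i) (D.Z i) = upperClosure (Set.range D.u) := by
  ext b
  refine ⟨fun hb => ?_, fun hb => ?_⟩
  · obtain ⟨i, hi, -⟩ := Set.mem_iUnion.mp hb
    exact mem_upperClosure.mpr ⟨_, ⟨i, rfl⟩, hi⟩
  · obtain ⟨_, ⟨i, rfl⟩, hib⟩ := mem_upperClosure.mp hb
    have hbI : monomial b (1 : K) ∈ I.restrictScalars K := by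
      rw [← add_tsub_cancel_of_le hib, ← mul_one (1 : K), ← monomial_mul]
      exact I.mul_mem_right _ (D.mem i)
    simpa [D.restrictScalars_eq] using hbI

theorem eq_span (D : StanleyDecomposition K I) :
    I = Ideal.span ((monomial · (1 : K)) '' Set.range D.u) :=
  Submodule.restrictScalars_injective K _ _ <| by
    rw [restrictScalars_span_monomial_image, ← D.iUnion_stanleyExponents, D.restrictScalars_eq]

section OfExponents

variable {ι : Type*} [Fintype ι] [Nonempty ι] (u : ι → Fin n →₀ ℕ) (Z : ι → Finset (Fin n))
  (hmem : ∀ i, monomial (u i) (1 : K) ∈ I)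
  (hexp : I.restrictScalars K = restrictSupport K (⋃ i, stanleyExponents (u i) (Z i)))
  (hdisj : Pairwise (Disjoint on fun i => stanleyExponents (u i) (Z i)))

noncomputable def ofExponents : StanleyDecomposition K I where
  r := Fintype.card ι
  rpos := Fintype.card_pos
  u := u ∘ (Fintype.equivFin ι).symm
  Z := Z ∘ (Fintype.equivFin ι).symm
  mem _ := hmem _
  isSup := by
    simp only [comp_apply, stanleySpace_eq_restrictSupport, iSup_restrictSupport, hexp,
      (Fintype.equivFin ι).symm.surjective.iUnion_comp fun i => stanleyExponents (u i) (Z i)]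
  indep := by
    simp only [comp_apply, stanleySpace_eq_restrictSupport]
    exact iSupIndep_restrictSupport_iff.mpr
      (hdisj.comp_of_injective (Fintype.equivFin ι).symm.injective)

theorem le_sdepth_ofExponents {d : ℕ} (hd : ∀ i, d ≤ (Z i).card) :
    d ≤ (ofExponents u Z hmem hexp hdisj).sdepth :=
  (le_sdepth_iff _).mpr fun _ => hd _

end OfExponents

end

variable {I : Ideal (MvPolynomial (Fin (n + 1)) K)}

theorem exists_sdepth_le_map_dehomogenizeLast (D : StanleyDecomposition K I) :
    ∃ D' : StanleyDecomposition K (I.map (dehomogenizeLast K n)), D.sdepth ≤ D'.sdepth + 1 := by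
  classical
  set c := Finset.univ.sup (fun i => D.u i (Fin.last n)) + 1
  have hc : ∀ i, D.u i (Fin.last n) < c := fun i =>
    Nat.lt_succ_of_le (Finset.le_sup (f := fun i => D.u i (Fin.last n)) (Finset.mem_univ i))
  let ι := {i : Fin D.r // Fin.last n ∈ D.Z i}
  let u' : ι → Fin n →₀ ℕ := fun i => init (D.u i)
  let Z' : ι → Finset (Fin n) := fun i =>
    (D.Z i).preimage Fin.castSucc (Fin.castSucc_injective n).injOn
  have hslice (a : Fin n →₀ ℕ) : a ∈ upperClosure (init '' Set.range D.u) ↔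
      ∃ i : ι, a ∈ stanleyExponents (u' i) (Z' i) := by
    rw [← snoc_mem_upperClosure_iff (c := c) (by rintro _ ⟨i, rfl⟩; exact (hc i).le),
      ← SetLike.mem_coe, ← D.iUnion_stanleyExponents, Set.mem_iUnion]
    simp only [snoc_mem_stanleyExponents_iff (hc _)]
    exact ⟨fun ⟨i, hi, ha⟩ => ⟨⟨i, hi⟩, ha⟩, fun ⟨i, ha⟩ => ⟨i, i.2, ha⟩⟩
  have hexp : (I.map (dehomogenizeLast K n)).restrictScalars K =
      restrictSupport K (⋃ i, stanleyExponents (u' i) (Z' i)) := by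
    rw [D.eq_span, map_dehomogenizeLast_span_monomial, restrictScalars_span_monomial_image]
    congr 1
    ext a
    simp [hslice]
  have hne : Nonempty ι := by
    obtain ⟨i, -⟩ := (hslice (init (D.u ⟨0, D.rpos⟩))).mp (subset_upperClosure ⟨_, ⟨_, rfl⟩, rfl⟩)
    exact ⟨i⟩
  have hmem (i : ι) : monomial (u' i) (1 : K) ∈ I.map (dehomogenizeLast K n) :=
    dehomogenizeLast_monomial (R := K) (D.u i) ▸ Ideal.mem_map_of_mem _ (D.mem i)
  have hdisj : Pairwise (Disjoint on fun i => stanleyExponents (u' i) (Z' i)) := by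
    refine fun i j hij => Set.disjoint_left.mpr fun a hi hj => ?_
    exact Set.disjoint_left.mp (D.pairwise_disjoint (Subtype.coe_injective.ne hij))
      ((snoc_mem_stanleyExponents_iff (hc i)).mpr ⟨i.2, hi⟩)
      ((snoc_mem_stanleyExponents_iff (hc j)).mpr ⟨j.2, hj⟩)
  refine ⟨ofExponents u' Z' hmem hexp hdisj,
    Nat.sub_le_iff_le_add.mp (le_sdepth_ofExponents _ _ _ _ _ fun i => ?_)⟩
  have := Finset.card_preimage_castSucc_add_one i.2
  have := D.sdepth_le_card i
  dsimp only [Z']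
  omega

end StanleyDecomposition

theorem Ideal.sdepth_le {K : Type*} [Field K] {n : ℕ} {I : Ideal (MvPolynomial (Fin n) K)} {d : ℕ}
    (h : ∀ D : StanleyDecomposition K I, D.sdepth ≤ d) : I.sdepth K ≤ d :=
  csSup_le' <| Set.forall_mem_range.mpr h

theorem sdepth_contraction_general (n : ℕ) (K : Type*) [Field K]
    (I' : Ideal (MvPolynomial (Fin (n + 1)) K)) :
    Ideal.sdepth K I' ≤
    Ideal.sdepth K
      (Ideal.map (MvPolynomial.aeval (R := K) (Fin.snoc MvPolynomial.X 1) :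
        MvPolynomial (Fin (n + 1)) K →ₐ[K] MvPolynomial (Fin n) K) I') + 1 := by
  refine Ideal.sdepth_le fun D => ?_
  obtain ⟨D', hD'⟩ := D.exists_sdepth_le_map_dehomogenizeLast
  exact hD'.trans (Nat.add_le_add_right D'.sdepth_le_sdepth 1)

/-- Let `φ : S[x_{n+1}] → S` be the `K`-algebra map sending `x_{n+1}` to `1` and fixing
the other variables. If `I' ⊆ S[x_{n+1}]` is a monomial ideal and `I = φ(I')`, then
`sdepth I' ≤ sdepth I + 1`. -/
theorem sdepth_contraction (n : ℕ) (K : Type*) [Field K]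
    (I' : Ideal (MvPolynomial (Fin (n + 1)) K))
    (m : ℕ) (w : Fin m → (Fin (n + 1) →₀ ℕ))
    (hI' : I' = Ideal.span (Set.range fun i => monomial (w i) (1 : K))) :
    Ideal.sdepth K I' ≤
    Ideal.sdepth K
      (Ideal.map (MvPolynomial.aeval (R := K) (Fin.snoc MvPolynomial.X 1) :
        MvPolynomial (Fin (n + 1)) K →ₐ[K] MvPolynomial (Fin n) K) I') + 1 :=
  sdepth_contraction_general n K I'
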